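/- arXiv:1708.06965 — 2 statements merged into one kernel-verified Lean document; each statement's English description precedes it below -/
import Mathlib

section
/- Let f and g be positive non-increasing functions on (0,1), and let (r_n) be a strictly decreasing sequence of positive reals converging to 0. If f(r_n)/g(r_n) → ℓ ∈ [0,∞) and f(r_{n+1})/f(r_n) → 1 as n → ∞, then f(r)/g(r) → ℓ as r → 0+. -/
open Filter Set

theorem ratio_limit_along_sequence (f g : ℝ → ℝ) (r : ℕ → ℝ) (ℓ : ℝ)
    (hf_pos : ∀ x ∈ Ioo (0:ℝ) 1, 0 < f x) (hg_pos : ∀ x ∈ Ioo (0:ℝ) 1, 0 < g x)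
    (hf_anti : AntitoneOn f (Ioo (0:ℝ) 1)) (hg_anti : AntitoneOn g (Ioo (0:ℝ) 1))
    (hr_pos : ∀ n, 0 < r n) (hr_dec : StrictAnti r)
    (hr_lim : Tendsto r atTop (nhds 0))
    (hℓ : 0 ≤ ℓ)
    (h_ratio : Tendsto (fun n => f (r n) / g (r n)) atTop (nhds ℓ))
    (h_f_ratio : Tendsto (fun n => f (r (n + 1)) / f (r n)) atTop (nhds 1)) :
    Tendsto (fun x => f x / g x) (nhdsWithin 0 (Ioi 0)) (nhds ℓ) := by
  have hev : ∀ᶠ n in atTop, r n < 1 := hr_lim.eventually_lt_const zero_lt_one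
  have hmem : ∀ᶠ n in atTop, r n ∈ Ioo (0:ℝ) 1 := hev.mono fun n h => ⟨hr_pos n, h⟩
  have hmem1 : ∀ᶠ n in atTop, r (n + 1) ∈ Ioo (0:ℝ) 1 := by
    filter_upwards [hmem] with n hn
    exact ⟨hr_pos _, lt_trans (hr_dec (Nat.lt_succ_self n)) hn.2⟩
  -- upper sequence
  have hu : Tendsto (fun n => f (r (n + 1)) / g (r n)) atTop (nhds ℓ) := by
    have heq : ∀ᶠ n in atTop, (f (r (n + 1)) / f (r n)) * (f (r n) / g (r n))
        = f (r (n + 1)) / g (r n) := by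
      filter_upwards [hmem] with n hn
      have hfn := (hf_pos _ hn).ne'
      field_simp
    have := h_f_ratio.mul h_ratio
    rw [one_mul] at this
    exact this.congr' heq
  -- lower sequence
  have hv : Tendsto (fun n => f (r n) / g (r (n + 1))) atTop (nhds ℓ) := by
    have h1 : Tendsto (fun n => f (r n) / f (r (n + 1))) atTop (nhds 1) := by
      have := h_f_ratio.inv₀ one_ne_zero
      rw [inv_one] at this
      refine this.congr' ?_
      filter_upwards [hmem1] with n hn
      rw [inv_div]
    have h2 : Tendsto (fun n => f (r (n + 1)) / g (r (n + 1))) atTop (nhds ℓ) :=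
      h_ratio.comp (tendsto_add_atTop_nat 1)
    have heq : ∀ᶠ n in atTop, (f (r n) / f (r (n + 1))) * (f (r (n + 1)) / g (r (n + 1)))
        = f (r n) / g (r (n + 1)) := by
      filter_upwards [hmem1] with n hn
      have := (hf_pos _ hn).ne'
      field_simp
    have := h1.mul h2
    rw [one_mul] at this
    exact this.congr' heq
  rw [Metric.tendsto_nhdsWithin_nhds]
  intro ε hε
  obtain ⟨M₁, hM₁⟩ := (Metric.tendsto_atTop.mp hu) ε hε
  obtain ⟨M₂, hM₂⟩ := (Metric.tendsto_atTop.mp hv) ε hε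
  obtain ⟨M₃, hM₃⟩ := hev.exists_forall_of_atTop
  set M := max M₁ (max M₂ M₃) with hM
  refine ⟨r M, hr_pos M, ?_⟩
  intro x hx hdx
  rw [Real.dist_eq, sub_zero, abs_of_pos hx] at hdx
  -- find n ≥ M with r (n+1) < x ≤ r n
  have hex : ∃ n, r n < x := by
    rcases (hr_lim.eventually_lt_const hx).exists with ⟨n, hn⟩
    exact ⟨n, hn⟩
  classical
  set k := Nat.find hex with hk
  have hrk : r k < x := Nat.find_spec hex
  have hkM : M < k := by
    by_contra h
    push_neg at h
    have : r M ≤ r k := hr_dec.antitone h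
    linarith
  obtain ⟨n, hkn⟩ : ∃ n, k = n + 1 :=
    ⟨k - 1, (Nat.succ_pred_eq_of_pos (Nat.lt_of_le_of_lt (Nat.zero_le M) hkM)).symm⟩
  rw [hkn] at hrk hkM
  have hnM : M ≤ n := Nat.lt_succ_iff.mp hkM
  have hxn : x ≤ r n := by
    have h := Nat.find_min hex (m := n) (by omega)
    push_neg at h
    exact h
  have hrM1 : r M < 1 := hM₃ M (by simp only [hM]; omega)
  have hrn1 : r n < 1 := lt_of_le_of_lt (hr_dec.antitone hnM) hrM1
  have hxI : x ∈ Ioo (0:ℝ) 1 := ⟨hx, lt_of_le_of_lt hxn hrn1⟩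
  have hrnI : r n ∈ Ioo (0:ℝ) 1 := ⟨hr_pos n, hrn1⟩
  have hrn1I : r (n + 1) ∈ Ioo (0:ℝ) 1 := ⟨hr_pos _, lt_trans hrk hxI.2⟩
  have hfb : f x ≤ f (r (n + 1)) := hf_anti hrn1I hxI (le_of_lt hrk)
  have hfb' : f (r n) ≤ f x := hf_anti hxI hrnI hxn
  have hgb : g (r n) ≤ g x := hg_anti hxI hrnI hxn
  have hgb' : g x ≤ g (r (n + 1)) := hg_anti hrn1I hxI (le_of_lt hrk)
  have hgx : 0 < g x := hg_pos _ hxI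
  have hfx : 0 < f x := hf_pos _ hxI
  have hgn : 0 < g (r n) := hg_pos _ hrnI
  have hgn1 : 0 < g (r (n + 1)) := hg_pos _ hrn1I
  have hfn : 0 < f (r n) := hf_pos _ hrnI
  have hub : f x / g x ≤ f (r (n + 1)) / g (r n) := div_le_div₀ (le_trans hfx.le hfb) hfb hgn hgb
  have hlb : f (r n) / g (r (n + 1)) ≤ f x / g x := div_le_div₀ hfx.le hfb' hgx hgb'
  have h1 := hM₁ n (le_trans (le_max_left _ _) hnM)
  have h2 := hM₂ n (le_trans (by simp only [hM]; omega) hnM)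
  rw [Real.dist_eq, abs_sub_lt_iff] at h1 h2 ⊢
  constructor
  · linarith [h1.1]
  · linarith [h2.2]
end

section
/- Let a = yz + 1 - y - z and b = y + z - 1 with y, z > 1 (so a > 0 and b > 1), and define ψ₄(u) = (a+b)²·[2(a+b)/(au+b)³ - 1/(au+b)²] for u ∈ (0,1). Then ∫₀¹ (-log(1-u))·ψ₄(u) du = (a+b)/b = yz/(y+z-1). -/
/-!
With `φ u = (a + b)² / (a u + b)²` one has `ψ₄ = -((1 - u) φ)'`. Integrating by parts against
`log (1 - u)`, the boundary term `(1 - u) log (1 - u) φ u` vanishes at both ends, so the integral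
equals `∫₀¹ φ = (a + b) / b`, and `a + b = y z`.
-/

open Real Set MeasureTheory intervalIntegral

lemma intervalIntegrable_log_one_sub :
    IntervalIntegrable (fun u : ℝ => log (1 - u)) volume 0 1 := by
  simpa using (intervalIntegrable_log' (a := 1) (b := 0)).comp_sub_left 1

lemma hasDerivAt_one_sub_mul_log_one_sub {x : ℝ} (hx : x ≠ 1) :
    HasDerivAt (fun u : ℝ => (1 - u) * log (1 - u)) (-log (1 - x) - 1) x := by
  refine ((hasDerivAt_mul_log (sub_ne_zero.mpr hx.symm)).comp x
    ((hasDerivAt_id x).const_sub 1)).congr_deriv ?_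
  ring

theorem integral_log_one_sub_mul_deriv_one_sub_mul {φ φ' : ℝ → ℝ}
    (hφ : ContinuousOn φ (Icc 0 1)) (hφ' : ContinuousOn φ' (Icc 0 1))
    (hderiv : ∀ x ∈ Ioo (0:ℝ) 1, HasDerivAt φ (φ' x) x) :
    ∫ u in (0:ℝ)..1, log (1 - u) * ((1 - u) * φ' u - φ u) = ∫ u in (0:ℝ)..1, φ u := by
  have hφint : IntervalIntegrable φ volume 0 1 :=
    hφ.intervalIntegrable_of_Icc zero_le_one
  have hlogint : IntervalIntegrable (fun u => log (1 - u) * ((1 - u) * φ' u - φ u)) volume 0 1 :=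
    intervalIntegrable_log_one_sub.mul_continuousOn <| by
      rw [uIcc_of_le zero_le_one]
      exact ((continuousOn_const.sub continuousOn_id).mul hφ').sub hφ
  have hF : ∫ u in (0:ℝ)..1, (log (1 - u) * ((1 - u) * φ' u - φ u) - φ u) = 0 := by
    rw [integral_eq_sub_of_hasDerivAt_of_le zero_le_one
      (f := fun u => (1 - u) * log (1 - u) * φ u)]
    · simp
    · exact ((continuous_mul_log.comp (continuous_sub_left 1)).continuousOn).mul hφ
    · intro x hx
      refine ((hasDerivAt_one_sub_mul_log_one_sub hx.2.ne).mul (hderiv x hx)).congr_deriv ?_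
      ring
    · exact hlogint.sub hφint
  rwa [integral_sub hlogint hφint, sub_eq_zero] at hF

lemma linear_pos_of_mem_Icc {a b u : ℝ} (hb : 0 < b) (hab : 0 < a + b) (hu : u ∈ Icc (0:ℝ) 1) :
    0 < a * u + b := by
  rcases le_total 0 a with ha | ha <;> nlinarith [hu.1, hu.2]

lemma hasDerivAt_div_linear_sq (a b c : ℝ) {x : ℝ} (hx : a * x + b ≠ 0) :
    HasDerivAt (fun u => c / (a * u + b) ^ 2) (-(2 * a * c) / (a * x + b) ^ 3) x := by
  have h := (hasDerivAt_const x c).div (((hasDerivAt_id x).const_mul a).add_const b |>.pow 2)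
    (pow_ne_zero 2 hx)
  refine h.congr_deriv ?_
  simp only [Pi.pow_apply, id]
  field_simp
  ring

lemma integral_div_linear_sq {a b : ℝ} (c : ℝ) (hb : 0 < b) (hab : 0 < a + b) :
    ∫ u in (0:ℝ)..1, c / (a * u + b) ^ 2 = c / (b * (a + b)) := by
  have hpos := fun u (hu : u ∈ Icc (0:ℝ) 1) => linear_pos_of_mem_Icc hb hab hu
  -- this primitive, unlike `-c / (a (a u + b))`, also covers `a = 0`
  rw [integral_eq_sub_of_hasDerivAt_of_le zero_le_one (f := fun u => c * u / (b * (a * u + b)))]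
  · simp
  · exact ContinuousOn.div (by fun_prop) (by fun_prop)
      fun u hu => mul_ne_zero hb.ne' (hpos u hu).ne'
  · intro x hx
    have hx' := (hpos x (Ioo_subset_Icc_self hx)).ne'
    have h := ((hasDerivAt_id x).const_mul c).div
      (((hasDerivAt_id x).const_mul a).add_const b |>.const_mul b) (mul_ne_zero hb.ne' hx')
    refine h.congr_deriv ?_
    simp only [id]
    field_simp
    ring
  · refine ContinuousOn.intervalIntegrable_of_Icc zero_le_one ?_
    exact continuousOn_const.div (by fun_prop) fun u hu => pow_ne_zero 2 (hpos u hu).ne'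

noncomputable def psi4 (a b u : ℝ) : ℝ :=
  (a + b) ^ 2 * (2 * (a + b) / (a * u + b) ^ 3 - 1 / (a * u + b) ^ 2)

lemma psi4_eq_neg_deriv {a b u : ℝ} (hu : a * u + b ≠ 0) :
    psi4 a b u = -((1 - u) * (-(2 * a * (a + b) ^ 2) / (a * u + b) ^ 3)
      - (a + b) ^ 2 / (a * u + b) ^ 2) := by
  unfold psi4
  field_simp
  ring

theorem integral_neg_log_one_sub_mul_psi4 {a b : ℝ} (hb : 0 < b) (hab : 0 < a + b) :
    ∫ u in (0:ℝ)..1, -log (1 - u) * psi4 a b u = (a + b) / b := by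
  have hpos := fun u (hu : u ∈ Icc (0:ℝ) 1) => linear_pos_of_mem_Icc hb hab hu
  calc ∫ u in (0:ℝ)..1, -log (1 - u) * psi4 a b u
      = ∫ u in (0:ℝ)..1, log (1 - u) * ((1 - u) * (-(2 * a * (a + b) ^ 2) / (a * u + b) ^ 3)
          - (a + b) ^ 2 / (a * u + b) ^ 2) := by
        refine integral_congr fun u hu => ?_
        rw [uIcc_of_le zero_le_one] at hu
        simp only [psi4_eq_neg_deriv (hpos u hu).ne']
        ring
    _ = ∫ u in (0:ℝ)..1, (a + b) ^ 2 / (a * u + b) ^ 2 :=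
        integral_log_one_sub_mul_deriv_one_sub_mul
          (continuousOn_const.div (by fun_prop) fun u hu => pow_ne_zero 2 (hpos u hu).ne')
          (continuousOn_const.div (by fun_prop) fun u hu => pow_ne_zero 3 (hpos u hu).ne')
          fun x hx => hasDerivAt_div_linear_sq a b _ (hpos x (Ioo_subset_Icc_self hx)).ne'
    _ = (a + b) / b := by
        rw [integral_div_linear_sq _ hb hab]
        field_simp

theorem psi4_integral (y z : ℝ) (hy : 1 < y) (hz : 1 < z) :
    let a := y * z + 1 - y - z
    let b := y + z - 1
    (∫ u in (0:ℝ)..1, (-Real.log (1 - u)) *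
        ((a + b) ^ 2 * (2 * (a + b) / (a * u + b) ^ 3 - 1 / (a * u + b) ^ 2)))
      = y * z / (y + z - 1) := by
  intro a b
  have hab : a + b = y * z := by ring
  have hb : 0 < b := by linarith
  change ∫ u in (0:ℝ)..1, -log (1 - u) * psi4 a b u = _
  rw [integral_neg_log_one_sub_mul_psi4 hb (by nlinarith), hab]
end
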